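/- Let C be a finite-type Cartan matrix of size n. For subsets I, J, K ⊆ {1,…,n}, with I having increasing enumeration I = {i_1 < … < i_l}, define m_{I,J}^K := [M_{i_1}···M_{i_l}]_{(J,K)}, the entry in row J and column K of the product of the non-equivariant structure-constant matrices. Then m_{I,J}^K ≠ 0 if and only if I ∪ J ⊆ K and, for every connected component V of K in the Dynkin graph of C, one has |V| = |V ∩ I| + |V ∩ J|. -/

import Mathlib

open Matrix Finset
set_option maxHeartbeats 1000000

/-- A finite-type Cartan matrix: an integer square matrix (on a nonempty finite index set) with
`2`'s on the diagonal, nonpositive off-diagonal entries, which becomes symmetric positive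
definite after multiplication by some diagonal matrix with strictly positive diagonal. -/
def IsFiniteCartan {ι : Type*} [Fintype ι] (C : Matrix ι ι ℤ) : Prop :=
  Nonempty ι ∧ (∀ i, C i i = 2) ∧ (∀ i j, i ≠ j → C i j ≤ 0) ∧
    ∃ D : Matrix ι ι ℝ, D.IsDiag ∧ (∀ i, 0 < D i i) ∧
      (D * C.map (Int.cast : ℤ → ℝ)).PosDef

/-- `[C_K⁻¹]_{i,k}`: the `(i,k)`-entry of the inverse of the principal submatrix of `C` (viewed
as a rational matrix) with rows and columns indexed by `K`, for `i, k ∈ K` (and `0` otherwise). -/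
noncomputable def cartanSubInv {n : ℕ} (C : Matrix (Fin n) (Fin n) ℤ) (K : Finset (Fin n))
    (i k : Fin n) : ℚ :=
  if hi : i ∈ K then
    if hk : k ∈ K then
      (((C.map (Int.cast : ℤ → ℚ)).submatrix (Subtype.val : {x // x ∈ K} → Fin n)
          Subtype.val)⁻¹) ⟨i, hi⟩ ⟨k, hk⟩
    else 0
  else 0

/-- The non-equivariant structure-constant matrix `M_i`: the `2ⁿ×2ⁿ` rational matrix, with rows
and columns indexed by subsets of `{1,…,n}`, whose `(J,K)`-entry is
`[C_K⁻¹]_{i,s}/[C_K⁻¹]_{s,s}` if `i ∈ K`, `|K| = |J|+1` and `K \ J = {s}`, and `0` otherwise. -/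
noncomputable def Mmat {n : ℕ} (C : Matrix (Fin n) (Fin n) ℤ) (i : Fin n) :
    Matrix (Finset (Fin n)) (Finset (Fin n)) ℚ :=
  Matrix.of fun J K =>
    if i ∈ K ∧ J ⊆ K ∧ K.card = J.card + 1 then
      ∑ s ∈ K \ J, cartanSubInv C K i s / cartanSubInv C K s s
    else 0

-- The connected component containing `v` of the subset `K` in the Dynkin graph of `C`
-- (the graph on the index set with an edge between distinct `a`, `b` iff `C_{ab} ≠ 0`):
-- the set of `u ∈ K` reachable from `v` by a path inside `K`.
open Classical in
noncomputable def dynkinComponent {n : ℕ} (C : Matrix (Fin n) (Fin n) ℤ)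
    (K : Finset (Fin n)) (v : Fin n) : Finset (Fin n) :=
  K.filter fun u =>
    Relation.ReflTransGen (fun a b => a ∈ K ∧ b ∈ K ∧ a ≠ b ∧ C a b ≠ 0) v u


section RealSide

variable {l m : Type*} [Fintype l] [Fintype m] [DecidableEq l] [DecidableEq m]

theorem posdef_submatrix_of_injective {M : Matrix l l ℝ} (hM : M.PosDef)
    (f : m → l) (hf : Function.Injective f) : (M.submatrix f f).PosDef := by
  refine Matrix.posDef_iff_dotProduct_mulVec.mpr ⟨hM.1.submatrix f, ?_⟩
  intro x hx
  set y : l → ℝ := Function.extend f x 0 with hy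
  have hyf : ∀ i, y (f i) = x i := fun i => hf.extend_apply x 0 i
  have key : ∀ g : l → ℝ, ∑ a, y a * g a = ∑ i, x i * g (f i) := by
    intro g
    have h1 : ∑ a ∈ Finset.univ.image f, y a * g a = ∑ i, y (f i) * g (f i) :=
      Finset.sum_image (fun a _ b _ h => hf h)
    have h2 : ∑ a, y a * g a = ∑ a ∈ Finset.univ.image f, y a * g a := by
      refine (Finset.sum_subset (Finset.subset_univ _) ?_).symm
      intro a _ ha
      have : y a = 0 := by
        rw [hy]
        apply Function.extend_apply'
        rintro ⟨i, rfl⟩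
        exact ha (Finset.mem_image_of_mem f (Finset.mem_univ i))
      simp [this]
    rw [h2, h1]
    simp [hyf]
  have hyne : y ≠ 0 := by
    intro h
    apply hx
    funext i
    have := congrFun h (f i)
    rwa [hyf] at this
  have := hM.dotProduct_mulVec_pos hyne
  have heq : star x ⬝ᵥ (M.submatrix f f) *ᵥ x = star y ⬝ᵥ M *ᵥ y := by
    simp only [star_trivial, dotProduct, mulVec, dotProduct]
    rw [key]
    congr 1
    funext i
    congr 1
    have := key (fun b => M (f i) b)
    simp only [submatrix_apply]
    rw [show (∑ x_1, M (f i) (f x_1) * x x_1) = ∑ x_1, x x_1 * M (f i) (f x_1) by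
      exact Finset.sum_congr rfl fun _ _ => mul_comm _ _, ← this]
    exact Finset.sum_congr rfl fun a _ => mul_comm _ _
  rw [heq]
  exact this

theorem cartan_inv_sign (A : Matrix m m ℝ) (d : m → ℝ) (hd : ∀ i, 0 < d i)
    (hPD : (Matrix.diagonal d * A).PosDef)
    (hdiag : ∀ i, A i i = 2) (hoff : ∀ i j, i ≠ j → A i j ≤ 0) :
    A.det ≠ 0 ∧ ∀ i j : m, 0 ≤ A⁻¹ i j ∧
      (0 < A⁻¹ i j ↔ Relation.ReflTransGen (fun a b : m => a ≠ b ∧ A a b ≠ 0) j i) := by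
  set S := Matrix.diagonal d * A with hS
  have hSe : ∀ i t, S i t = d i * A i t := fun i t => Matrix.diagonal_mul d A i t
  -- determinant
  have hdetS : 0 < S.det := hPD.det_pos
  have hdprod : 0 < ∏ i, d i := Finset.prod_pos fun i _ => hd i
  have hdetA : A.det ≠ 0 := by
    intro h
    rw [hS, Matrix.det_mul, Matrix.det_diagonal, h, mul_zero] at hdetS
    exact lt_irrefl _ hdetS
  have hdetU : IsUnit A.det := isUnit_iff_ne_zero.mpr hdetA
  -- pattern symmetry
  have hsymm : ∀ a b : m, A a b ≠ 0 → A b a ≠ 0 := by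
    intro a b hab hba
    have h1 : S b a = S a b := by
      have := hPD.1
      have h2 := congrFun (congrFun this a) b
      simpa [Matrix.conjTranspose_apply] using h2
    rw [hSe, hSe, hba, mul_zero] at h1
    exact hab (by
      have := h1.symm
      rcases mul_eq_zero.mp this with h | h
      · exact absurd h (ne_of_gt (hd a))
      · exact h)
  refine ⟨hdetA, fun i₀ j => ?_⟩
  classical
  set R : m → m → Prop := fun a b => a ≠ b ∧ A a b ≠ 0 with hR
  set x : m → ℝ := fun i => A⁻¹ i j with hx
  have hxid : ∀ i, ∑ k, A i k * x k = if i = j then 1 else 0 := by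
    intro i
    have h1 : A * A⁻¹ = 1 := Matrix.mul_nonsing_inv A hdetU
    have h2 := congrFun (congrFun h1 i) j
    rw [Matrix.mul_apply] at h2
    rw [h2, Matrix.one_apply]
  -- nonnegativity
  have hx0 : ∀ i, 0 ≤ x i := by
    by_contra hcon
    push_neg at hcon
    obtain ⟨i₁, hi₁⟩ := hcon
    set z : m → ℝ := fun i => max (-x i) 0 with hz
    have hzne : z ≠ 0 := by
      intro h
      have := congrFun h i₁
      simp only [hz, Pi.zero_apply] at this
      have : -x i₁ ≤ 0 := by
        rw [← this]; exact le_max_left _ _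
      linarith
    have hz0 : ∀ i, 0 ≤ z i := fun i => le_max_right _ _
    have hzval : ∀ i, z i ≠ 0 → (x i < 0 ∧ z i = -x i) := by
      intro i hi
      rcases le_or_gt 0 (x i) with h | h
      · exfalso; apply hi; simp [hz, max_eq_right, neg_nonpos.mpr h]
      · exact ⟨h, by simp [hz, max_eq_left, le_of_lt, neg_nonneg.mpr h.le]⟩
    set p : m → ℝ := fun i => max (x i) 0 with hp
    have hp0 : ∀ i, 0 ≤ p i := fun i => le_max_right _ _
    have hzp : ∀ i, z i = p i - x i := by
      intro i
      rcases le_or_gt 0 (x i) with h | h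
      · simp [hz, hp, max_eq_right (neg_nonpos.mpr h), max_eq_left h]
      · simp [hz, hp, max_eq_left (neg_nonneg.mpr h.le), max_eq_right h.le]
    have hSx : ∀ i, ∑ t, S i t * x t = d i * (if i = j then 1 else 0) := by
      intro i
      have : ∑ t, S i t * x t = d i * ∑ t, A i t * x t := by
        rw [Finset.mul_sum]
        exact Finset.sum_congr rfl fun t _ => by rw [hSe]; ring
      rw [this, hxid]
    have hQpos := hPD.dotProduct_mulVec_pos hzne
    rw [star_trivial] at hQpos
    have hQval : z ⬝ᵥ S *ᵥ z =
        (∑ i, ∑ t, z i * (S i t * p t)) - z j * d j := by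
      rw [dotProduct]
      have : ∀ i, (S *ᵥ z) i = (∑ t, S i t * p t) - d i * (if i = j then 1 else 0) := by
        intro i
        rw [Matrix.mulVec, dotProduct]
        have : ∑ t, S i t * z t = ∑ t, (S i t * p t - S i t * x t) := by
          exact Finset.sum_congr rfl fun t _ => by rw [hzp]; ring
        rw [this, Finset.sum_sub_distrib, hSx]
      rw [Finset.sum_congr rfl fun i _ => by rw [this i]]
      rw [show ∀ f g : m → ℝ, ∑ i, z i * (f i - g i) = ∑ i, (z i * f i - z i * g i) from
        fun f g => Finset.sum_congr rfl fun i _ => by ring]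
      rw [Finset.sum_sub_distrib]
      congr 1
      · exact Finset.sum_congr rfl fun i _ => Finset.mul_sum _ _ _
      · rw [Finset.sum_eq_single j]
        · simp
        · intro b _ hb; simp [hb]
        · intro h; exact absurd (Finset.mem_univ j) h
    have hterm : ∀ i t, z i * (S i t * p t) ≤ 0 := by
      intro i t
      rcases eq_or_ne (z i) 0 with h | h
      · rw [h, zero_mul]
      · obtain ⟨hxi, _⟩ := hzval i h
        rcases eq_or_ne t i with rfl | ht
        · have : p t = 0 := by simp [hp, max_eq_right hxi.le]
          rw [this, mul_zero, mul_zero]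
        · have hSit : S i t ≤ 0 := by
            rw [hSe]
            exact mul_nonpos_of_nonneg_of_nonpos (hd i).le (hoff i t (Ne.symm ht))
          exact mul_nonpos_of_nonneg_of_nonpos (hz0 i)
            (mul_nonpos_of_nonpos_of_nonneg hSit (hp0 t))
    have : z ⬝ᵥ S *ᵥ z ≤ 0 := by
      rw [hQval]
      have h1 : (∑ i, ∑ t, z i * (S i t * p t)) ≤ 0 :=
        Finset.sum_nonpos fun i _ => Finset.sum_nonpos fun t _ => hterm i t
      have h2 : 0 ≤ z j * d j := mul_nonneg (hz0 j) (hd j).le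
      linarith
    linarith
  -- x j > 0
  have hxj : 0 < x j := by
    have h1 := hxid j
    rw [if_pos rfl] at h1
    have h2 : ∑ k, A j k * x k = A j j * x j + ∑ k ∈ Finset.univ.erase j, A j k * x k := by
      rw [← Finset.add_sum_erase _ _ (Finset.mem_univ j)]
    have h3 : ∑ k ∈ Finset.univ.erase j, A j k * x k ≤ 0 :=
      Finset.sum_nonpos fun k hk =>
        mul_nonpos_of_nonpos_of_nonneg (hoff j k (Ne.symm (Finset.ne_of_mem_erase hk))) (hx0 k)
    rw [hdiag j] at h2
    nlinarith [h1, h2, h3]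
  -- propagation
  have hprop : ∀ t i : m, t ≠ i → A t i ≠ 0 → 0 < x i → 0 < x t := by
    intro t i hti hA hxi
    rcases eq_or_ne t j with rfl | htj
    · exact hxj
    · have h1 := hxid t
      rw [if_neg htj] at h1
      have h2 : ∑ k, A t k * x k = A t t * x t + ∑ k ∈ Finset.univ.erase t, A t k * x k := by
        rw [← Finset.add_sum_erase _ _ (Finset.mem_univ t)]
      have hi' : i ∈ Finset.univ.erase t := Finset.mem_erase.mpr ⟨Ne.symm hti, Finset.mem_univ i⟩
      have h3 : ∑ k ∈ Finset.univ.erase t, A t k * x k ≤ A t i * x i := by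
        rw [← Finset.add_sum_erase _ _ hi']
        have : ∑ k ∈ (Finset.univ.erase t).erase i, A t k * x k ≤ 0 :=
          Finset.sum_nonpos fun k hk => by
            have hkt : k ≠ t := Finset.ne_of_mem_erase (Finset.mem_of_mem_erase hk)
            exact mul_nonpos_of_nonpos_of_nonneg (hoff t k (Ne.symm hkt)) (hx0 k)
        linarith
      have h4 : A t i * x i < 0 :=
        mul_neg_of_neg_of_pos (lt_of_le_of_ne (hoff t i hti) hA) hxi
      rw [hdiag t] at h2
      nlinarith
  have hpos : ∀ i, Relation.ReflTransGen R j i → 0 < x i := by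
    intro i h
    induction h with
    | refl => exact hxj
    | tail _ hbc ih => exact hprop _ _ (Ne.symm hbc.1) (hsymm _ _ hbc.2) ih
  -- vanishing off the component
  have hzero : ∀ i, ¬ Relation.ReflTransGen R j i → x i = 0 := by
    intro i₂ hi₂
    set y : m → ℝ := fun t => if Relation.ReflTransGen R j t then x t else 0 with hy
    have hyid : ∀ i, ∑ k, A i k * y k = if i = j then 1 else 0 := by
      intro i
      by_cases hri : Relation.ReflTransGen R j i
      · rw [← hxid i]
        refine Finset.sum_congr rfl fun k _ => ?_
        by_cases hrk : Relation.ReflTransGen R j k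
        · rw [hy]; simp [hrk]
        · have : A i k = 0 := by
            by_contra hA
            rcases eq_or_ne i k with rfl | hik
            · exact hrk hri
            · exact hrk (hri.tail ⟨hik, hA⟩)
          rw [this, zero_mul, zero_mul]
      · have hij : i ≠ j := by rintro rfl; exact hri Relation.ReflTransGen.refl
        rw [if_neg hij]
        refine Finset.sum_eq_zero fun k _ => ?_
        by_cases hrk : Relation.ReflTransGen R j k
        · have : A i k = 0 := by
            by_contra hA
            rcases eq_or_ne k i with rfl | hki
            · exact hri hrk
            · exact hri (hrk.tail ⟨hki, hsymm i k hA⟩)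
          rw [this, zero_mul]
        · rw [hy]; simp [hrk]
    have hAyx : A *ᵥ y = A *ᵥ x := by
      funext i
      rw [Matrix.mulVec, Matrix.mulVec, dotProduct, dotProduct]
      rw [show ∑ k, A i k * y k = if i = j then 1 else 0 from hyid i, hxid i]
    have hyx : y = x := by
      have h1 : A⁻¹ *ᵥ (A *ᵥ y) = A⁻¹ *ᵥ (A *ᵥ x) := by rw [hAyx]
      rwa [Matrix.mulVec_mulVec, Matrix.mulVec_mulVec, Matrix.nonsing_inv_mul A hdetU,
        Matrix.one_mulVec, Matrix.one_mulVec] at h1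
    have := congrFun hyx i₂
    rw [hy] at this
    simp only [if_neg hi₂] at this
    exact this.symm
  refine ⟨hx0 i₀, ⟨fun h => ?_, hpos i₀⟩⟩
  by_contra hcon
  have hz : A⁻¹ i₀ j = 0 := hzero i₀ hcon
  rw [hz] at h
  exact lt_irrefl _ h

end RealSide


section Transfer

variable {n : ℕ} (C : Matrix (Fin n) (Fin n) ℤ)

/-- The Dynkin relation inside `K`. -/
def dRel (K : Finset (Fin n)) : Fin n → Fin n → Prop :=
  fun a b => a ∈ K ∧ b ∈ K ∧ a ≠ b ∧ C a b ≠ 0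

theorem cartanSubInv_key (hC : IsFiniteCartan C) (K : Finset (Fin n)) :
    (∀ i k, 0 ≤ cartanSubInv C K i k) ∧
    (∀ i k (hi : i ∈ K) (hk : k ∈ K),
      (0 < cartanSubInv C K i k ↔ Relation.ReflTransGen (dRel C K) k i)) := by
  classical
  obtain ⟨-, hdiag, hoff, D, hDdiag, hDpos, hPD⟩ := hC
  set Aℝ : Matrix {x // x ∈ K} {x // x ∈ K} ℝ :=
    (C.map (Int.cast : ℤ → ℝ)).submatrix Subtype.val Subtype.val with hAR
  set Aℚ : Matrix {x // x ∈ K} {x // x ∈ K} ℚ :=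
    (C.map (Int.cast : ℤ → ℚ)).submatrix Subtype.val Subtype.val with hAQ
  set d : {x // x ∈ K} → ℝ := fun i => D i.val i.val with hdd
  have hd : ∀ i, 0 < d i := fun i => hDpos i.val
  have hPD' : (Matrix.diagonal d * Aℝ).PosDef := by
    have h1 : ((D * C.map (Int.cast : ℤ → ℝ)).submatrix
        (Subtype.val : {x // x ∈ K} → Fin n) Subtype.val).PosDef :=
      posdef_submatrix_of_injective hPD _ Subtype.val_injective
    have h2 : Matrix.diagonal d * Aℝ = (D * C.map (Int.cast : ℤ → ℝ)).submatrix
        (Subtype.val : {x // x ∈ K} → Fin n) Subtype.val := by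
      ext i j
      rw [Matrix.diagonal_mul, Matrix.submatrix_apply, Matrix.mul_apply]
      rw [Finset.sum_eq_single i.val]
      · rw [hAR, Matrix.submatrix_apply]
      · intro b _ hb
        rw [hDdiag (Ne.symm hb), zero_mul]
      · intro h; exact absurd (Finset.mem_univ _) h
    rw [h2]
    exact h1
  have hAdiag : ∀ i, Aℝ i i = 2 := by
    intro i
    rw [hAR, Matrix.submatrix_apply, Matrix.map_apply, hdiag]
    norm_num
  have hAoff : ∀ i j, i ≠ j → Aℝ i j ≤ 0 := by
    intro i j hij
    rw [hAR, Matrix.submatrix_apply, Matrix.map_apply]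
    have : C i.val j.val ≤ 0 := hoff _ _ (fun h => hij (Subtype.ext h))
    exact_mod_cast this
  obtain ⟨hdetR, hsign⟩ := cartan_inv_sign Aℝ d hd hPD' hAdiag hAoff
  -- transfer to ℚ
  have hmap : Aℚ.map (Rat.cast : ℚ → ℝ) = Aℝ := by
    rw [hAQ, hAR]
    ext i j
    simp
  have hdetQ : Aℚ.det ≠ 0 := by
    intro h
    have := (algebraMap ℚ ℝ).map_det Aℚ
    rw [h] at this
    simp only [map_zero] at this
    rw [show (algebraMap ℚ ℝ).mapMatrix Aℚ = Aℚ.map (Rat.cast : ℚ → ℝ) from rfl, hmap] at this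
    exact hdetR this.symm
  have hinvmap : Aℚ⁻¹.map (Rat.cast : ℚ → ℝ) = Aℝ⁻¹ := by
    symm
    apply Matrix.inv_eq_right_inv
    have h1 : Aℚ * Aℚ⁻¹ = 1 := Matrix.mul_nonsing_inv Aℚ (isUnit_iff_ne_zero.mpr hdetQ)
    rw [← hmap]
    ext i j
    rw [Matrix.mul_apply, Matrix.one_apply]
    have h2 := congrFun (congrFun h1 i) j
    rw [Matrix.mul_apply, Matrix.one_apply] at h2
    simp only [Matrix.map_apply]
    have h3 : (∑ k, ((Aℚ i k : ℚ) : ℝ) * ((Aℚ⁻¹ k j : ℚ) : ℝ))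
        = ((∑ k, Aℚ i k * Aℚ⁻¹ k j : ℚ) : ℝ) := by push_cast; rfl
    rw [h3, h2]
    split <;> simp
  have hentry : ∀ (i k : Fin n) (hi : i ∈ K) (hk : k ∈ K),
      ((cartanSubInv C K i k : ℚ) : ℝ) = Aℝ⁻¹ ⟨i, hi⟩ ⟨k, hk⟩ := by
    intro i k hi hk
    rw [cartanSubInv, dif_pos hi, dif_pos hk, ← hinvmap, Matrix.map_apply]
  -- relation bridge
  have hrel : ∀ (i k : Fin n) (hi : i ∈ K) (hk : k ∈ K),
      (Relation.ReflTransGen (fun a b : {x // x ∈ K} => a ≠ b ∧ Aℝ a b ≠ 0)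
        ⟨k, hk⟩ ⟨i, hi⟩ ↔ Relation.ReflTransGen (dRel C K) k i) := by
    intro i k hi hk
    constructor
    · intro h
      have : ∀ (a b : {x // x ∈ K}),
          Relation.ReflTransGen (fun a b : {x // x ∈ K} => a ≠ b ∧ Aℝ a b ≠ 0) a b →
          Relation.ReflTransGen (dRel C K) a.val b.val := by
        intro a b hab
        induction hab with
        | refl => exact Relation.ReflTransGen.refl
        | tail _ hbc ih =>
          refine ih.tail ?_
          obtain ⟨hne, hA⟩ := hbc
          refine ⟨by simp, by simp, fun h => hne (Subtype.ext h), ?_⟩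
          rw [hAR, Matrix.submatrix_apply, Matrix.map_apply] at hA
          exact_mod_cast hA
      exact this _ _ h
    · intro h
      have : ∀ (u : Fin n), Relation.ReflTransGen (dRel C K) k u →
          ∀ hu : u ∈ K, Relation.ReflTransGen
            (fun a b : {x // x ∈ K} => a ≠ b ∧ Aℝ a b ≠ 0) ⟨k, hk⟩ ⟨u, hu⟩ := by
        intro u hu
        induction hu with
        | refl => intro _; exact Relation.ReflTransGen.refl
        | tail hab hbc ih =>
          intro hc
          obtain ⟨hbK, hcK, hne, hCbc⟩ := hbc
          refine (ih hbK).tail ?_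
          refine ⟨fun hh => hne (congrArg Subtype.val hh), ?_⟩
          rw [hAR, Matrix.submatrix_apply, Matrix.map_apply]
          exact_mod_cast hCbc
      exact this i h hi
  constructor
  · intro i k
    rw [cartanSubInv]
    split
    · split
      · rename_i hi hk
        have h1 := (hsign ⟨i, hi⟩ ⟨k, hk⟩).1
        have h2 := hentry i k hi hk
        rw [cartanSubInv, dif_pos hi, dif_pos hk] at h2
        rw [← h2] at h1
        exact_mod_cast h1
      · exact le_refl 0
    · exact le_refl 0
  · intro i k hi hk
    have h1 := (hsign ⟨i, hi⟩ ⟨k, hk⟩).2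
    have h2 := hentry i k hi hk
    rw [← hrel i k hi hk]
    rw [← h1, ← h2]
    exact ⟨fun h => by exact_mod_cast h, fun h => by exact_mod_cast h⟩

end Transfer



section Graph
variable {n : ℕ} {C : Matrix (Fin n) (Fin n) ℤ}

theorem mem_dynkinComponent {K : Finset (Fin n)} {v u : Fin n} :
    u ∈ dynkinComponent C K v ↔ u ∈ K ∧ Relation.ReflTransGen (dRel C K) v u := by
  classical
  rw [dynkinComponent, Finset.mem_filter]
  exact Iff.rfl

variable (hsym : ∀ a b : Fin n, C a b ≠ 0 → C b a ≠ 0)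

include hsym in
theorem dRel_symm {K : Finset (Fin n)} : Symmetric (dRel C K) := by
  rintro a b ⟨haK, hbK, hne, hC0⟩
  exact ⟨hbK, haK, hne.symm, hsym _ _ hC0⟩

include hsym in
theorem rtg_symm {K : Finset (Fin n)} {a b : Fin n}
    (h : Relation.ReflTransGen (dRel C K) a b) : Relation.ReflTransGen (dRel C K) b a := by
  induction h with
  | refl => exact .refl
  | tail _ hbc ih => exact Relation.ReflTransGen.trans (.single (dRel_symm hsym hbc)) ih

theorem dc_subset {K : Finset (Fin n)} {v : Fin n} : dynkinComponent C K v ⊆ K :=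
  fun u hu => (mem_dynkinComponent.mp hu).1

theorem dc_self {K : Finset (Fin n)} {v : Fin n} (hv : v ∈ K) :
    v ∈ dynkinComponent C K v := mem_dynkinComponent.mpr ⟨hv, .refl⟩

include hsym in
theorem dc_mem_iff_of_rel {K : Finset (Fin n)} {v u w : Fin n}
    (hrel : Relation.ReflTransGen (dRel C K) u w) (hu : u ∈ K) (hw : w ∈ K) :
    (u ∈ dynkinComponent C K v ↔ w ∈ dynkinComponent C K v) := by
  rw [mem_dynkinComponent, mem_dynkinComponent]
  exact ⟨fun h => ⟨hw, h.2.trans hrel⟩, fun h => ⟨hu, h.2.trans (rtg_symm hsym hrel)⟩⟩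

theorem rtg_mono {K K' : Finset (Fin n)} (hKK : K ⊆ K') {a b : Fin n}
    (h : Relation.ReflTransGen (dRel C K) a b) : Relation.ReflTransGen (dRel C K') a b := by
  refine Relation.ReflTransGen.mono ?_ a b h
  rintro x y ⟨hx, hy, hne, hC0⟩
  exact ⟨hKK hx, hKK hy, hne, hC0⟩

theorem card_inter_insert_of_mem {V X : Finset (Fin n)} {x : Fin n}
    (hxV : x ∈ V) (hxX : x ∉ X) : (V ∩ insert x X).card = (V ∩ X).card + 1 := by
  have h : V ∩ insert x X = insert x (V ∩ X) := by
    ext a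
    simp only [Finset.mem_inter, Finset.mem_insert]
    constructor
    · rintro ⟨haV, rfl | haX⟩
      · exact Or.inl rfl
      · exact Or.inr ⟨haV, haX⟩
    · rintro (rfl | ⟨haV, haX⟩)
      · exact ⟨hxV, Or.inl rfl⟩
      · exact ⟨haV, Or.inr haX⟩
  rw [h, Finset.card_insert_of_notMem (fun hx' => hxX (Finset.mem_inter.mp hx').2)]

theorem inter_insert_of_not_mem' {V X : Finset (Fin n)} {x : Fin n}
    (hxV : x ∉ V) : V ∩ insert x X = V ∩ X := by
  ext a
  simp only [Finset.mem_inter, Finset.mem_insert]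
  constructor
  · rintro ⟨haV, rfl | haX⟩
    · exact absurd haV hxV
    · exact ⟨haV, haX⟩
  · rintro ⟨haV, haX⟩
    exact ⟨haV, Or.inr haX⟩

end Graph


section MmatChar
variable {n : ℕ} {C : Matrix (Fin n) (Fin n) ℤ}

theorem cartan_symm (hC : IsFiniteCartan C) : ∀ a b : Fin n, C a b ≠ 0 → C b a ≠ 0 := by
  obtain ⟨-, -, -, D, hDdiag, hDpos, hPD⟩ := hC
  intro a b hab hba
  have hentry : ∀ u v : Fin n, (D * C.map (Int.cast : ℤ → ℝ)) u v = D u u * ((C u v : ℤ) : ℝ) := by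
    intro u v
    rw [Matrix.mul_apply, Finset.sum_eq_single u]
    · rw [Matrix.map_apply]
    · intro c _ hc
      rw [hDdiag (Ne.symm hc), zero_mul]
    · intro h; exact absurd (Finset.mem_univ _) h
  have h1 := congrFun (congrFun hPD.1 a) b
  rw [Matrix.conjTranspose_apply] at h1
  rw [hentry, hentry, hba] at h1
  simp only [Int.cast_zero, mul_zero, star_trivial] at h1
  have h2 : ((C a b : ℤ) : ℝ) ≠ 0 := Int.cast_ne_zero.mpr hab
  have := mul_ne_zero (ne_of_gt (hDpos a)) h2
  rw [← h1] at this
  exact this rfl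

theorem Mmat_nonneg (hC : IsFiniteCartan C) (i : Fin n) (J K : Finset (Fin n)) :
    0 ≤ Mmat C i J K := by
  rw [Mmat, Matrix.of_apply]
  split
  · exact Finset.sum_nonneg fun s _ =>
      div_nonneg ((cartanSubInv_key C hC K).1 i s) ((cartanSubInv_key C hC K).1 s s)
  · exact le_refl 0

theorem Mmat_ne_zero_iff (hC : IsFiniteCartan C) {i : Fin n} {J K' : Finset (Fin n)} :
    Mmat C i J K' ≠ 0 ↔
      ∃ s, s ∉ J ∧ K' = insert s J ∧ i ∈ K' ∧ Relation.ReflTransGen (dRel C K') s i := by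
  obtain ⟨hnn, hpos⟩ := cartanSubInv_key C hC K'
  constructor
  · intro hne
    rw [Mmat, Matrix.of_apply] at hne
    split at hne
    · rename_i hcond
      obtain ⟨hiK, hJK, hcard⟩ := hcond
      have hsd : (K' \ J).card = 1 := by
        rw [Finset.card_sdiff_of_subset hJK, hcard]
        omega
      obtain ⟨s, hs⟩ := Finset.card_eq_one.mp hsd
      have hsmem : s ∈ K' \ J := hs ▸ Finset.mem_singleton_self s
      have hsK : s ∈ K' := (Finset.mem_sdiff.mp hsmem).1
      have hsJ : s ∉ J := (Finset.mem_sdiff.mp hsmem).2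
      rw [hs, Finset.sum_singleton] at hne
      have hKeq : K' = insert s J := by
        refine (Finset.eq_of_subset_of_card_le ?_ ?_).symm
        · intro a ha
          rcases Finset.mem_insert.mp ha with rfl | h
          · exact hsK
          · exact hJK h
        · rw [hcard, Finset.card_insert_of_notMem hsJ]
      refine ⟨s, hsJ, hKeq, hiK, ?_⟩
      have hnum : cartanSubInv C K' i s ≠ 0 := fun h => hne (by rw [h, zero_div])
      have hlt : 0 < cartanSubInv C K' i s := lt_of_le_of_ne (hnn i s) (Ne.symm hnum)
      exact (hpos i s hiK hsK).mp hlt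
    · exact absurd rfl hne
  · rintro ⟨s, hsJ, rfl, hiK, hrtg⟩
    have hJK : J ⊆ insert s J := Finset.subset_insert s J
    have hcard : (insert s J).card = J.card + 1 := Finset.card_insert_of_notMem hsJ
    have hsd : insert s J \ J = {s} := by
      ext a
      simp only [Finset.mem_sdiff, Finset.mem_insert, Finset.mem_singleton]
      constructor
      · rintro ⟨rfl | h, haJ⟩
        · rfl
        · exact absurd h haJ
      · rintro rfl
        exact ⟨Or.inl rfl, hsJ⟩
    rw [Mmat, Matrix.of_apply, if_pos ⟨hiK, hJK, hcard⟩, hsd, Finset.sum_singleton]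
    have hsK : s ∈ insert s J := Finset.mem_insert_self s J
    have hnum : 0 < cartanSubInv C (insert s J) i s := (hpos i s hiK hsK).mpr hrtg
    have hden : 0 < cartanSubInv C (insert s J) s s := (hpos s s hsK hsK).mpr .refl
    exact ne_of_gt (div_pos hnum hden)

end MmatChar

section Chain
variable {n : ℕ}

def chainOK : List (Matrix (Finset (Fin n)) (Finset (Fin n)) ℚ) →
    Finset (Fin n) → Finset (Fin n) → Prop
  | [], J, K => J = K
  | M :: L, J, K => ∃ K', M J K' ≠ 0 ∧ chainOK L K' K

theorem prod_entry_sign (L : List (Matrix (Finset (Fin n)) (Finset (Fin n)) ℚ))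
    (h : ∀ M ∈ L, ∀ a b, 0 ≤ M a b) :
    ∀ J K, 0 ≤ L.prod J K ∧ (L.prod J K ≠ 0 ↔ chainOK L J K) := by
  induction L with
  | nil =>
    intro J K
    rw [List.prod_nil]
    constructor
    · rw [Matrix.one_apply]
      split <;> norm_num
    · rw [Matrix.one_apply]
      constructor
      · intro hne
        by_contra hc
        rw [show chainOK [] J K = (J = K) from rfl] at hc
        rw [if_neg hc] at hne
        exact hne rfl
      · intro hc
        rw [show chainOK [] J K = (J = K) from rfl] at hc
        rw [if_pos hc]
        norm_num
  | cons M L ih =>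
    have hM : ∀ a b, 0 ≤ M a b := h M List.mem_cons_self
    have hL := ih (fun N hN => h N (List.mem_cons_of_mem _ hN))
    intro J K
    rw [List.prod_cons, Matrix.mul_apply]
    have hnn : ∀ K' ∈ Finset.univ, 0 ≤ M J K' * L.prod K' K :=
      fun K' _ => mul_nonneg (hM J K') (hL K' K).1
    refine ⟨Finset.sum_nonneg hnn, ?_⟩
    rw [show chainOK (M :: L) J K = ∃ K', M J K' ≠ 0 ∧ chainOK L K' K from rfl]
    constructor
    · intro hne
      by_contra hcon
      push_neg at hcon
      apply hne
      refine Finset.sum_eq_zero fun K' _ => ?_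
      rcases eq_or_ne (M J K') 0 with h0 | h0
      · rw [h0, zero_mul]
      · have hch : ¬ chainOK L K' K := hcon K' h0
        have : L.prod K' K = 0 := by
          by_contra hne'
          exact hch ((hL K' K).2.mp hne')
        rw [this, mul_zero]
    · rintro ⟨K', hMne, hch⟩
      have h1 : 0 < M J K' * L.prod K' K :=
        mul_pos (lt_of_le_of_ne (hM J K') (Ne.symm hMne))
          (lt_of_le_of_ne (hL K' K).1 (Ne.symm ((hL K' K).2.mpr hch)))
      intro hsum
      have h2 := (Finset.sum_eq_zero_iff_of_nonneg hnn).mp hsum K' (Finset.mem_univ K')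
      rw [h2] at h1
      exact lt_irrefl _ h1

variable {C : Matrix (Fin n) (Fin n) ℤ}

theorem chain_iff_cond (hC : IsFiniteCartan C) (K : Finset (Fin n)) :
    ∀ (l : List (Fin n)), l.Nodup → ∀ J : Finset (Fin n),
      (chainOK (l.map (Mmat C)) J K ↔
        (l.toFinset ∪ J ⊆ K ∧ ∀ v ∈ K,
          (dynkinComponent C K v).card =
            ((dynkinComponent C K v) ∩ l.toFinset).card +
              ((dynkinComponent C K v) ∩ J).card)) := by
  have hsym := cartan_symm hC
  intro l
  induction l with
  | nil =>
    intro _ J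
    rw [List.map_nil, show chainOK ([] : List (Matrix (Finset (Fin n)) (Finset (Fin n)) ℚ)) J K = (J = K) from rfl]
    simp only [List.toFinset_nil]
    constructor
    · rintro rfl
      refine ⟨by simp, fun v hv => ?_⟩
      rw [Finset.inter_empty, Finset.card_empty,
        Finset.inter_eq_left.mpr (dc_subset (C := C)), Nat.zero_add]
    · rintro ⟨hsub, hcards⟩
      have hJK : J ⊆ K := le_trans (Finset.subset_union_right) hsub
      refine Finset.Subset.antisymm hJK (fun v hv => ?_)
      have h := hcards v hv
      rw [Finset.inter_empty, Finset.card_empty, Nat.zero_add] at h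
      have hVJ : dynkinComponent C K v ∩ J = dynkinComponent C K v :=
        Finset.eq_of_subset_of_card_le Finset.inter_subset_left (le_of_eq h)
      have : dynkinComponent C K v ⊆ J := by
        rw [← hVJ]
        exact Finset.inter_subset_right
      exact this (dc_self hv)
  | cons i l IH =>
    intro hnd J
    have hil : i ∉ l := (List.nodup_cons.mp hnd).1
    have hndl : l.Nodup := (List.nodup_cons.mp hnd).2
    have hilF : i ∉ l.toFinset := fun h => hil (List.mem_toFinset.mp h)
    rw [List.map_cons,
      show chainOK (Mmat C i :: l.map (Mmat C)) J K
        = ∃ K', Mmat C i J K' ≠ 0 ∧ chainOK (l.map (Mmat C)) K' K from rfl,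
      List.toFinset_cons]
    constructor
    · rintro ⟨K₁, hM, hch⟩
      obtain ⟨s, hsJ, rfl, hiK₁, hrtg₁⟩ := (Mmat_ne_zero_iff hC).mp hM
      obtain ⟨hsub', hcards'⟩ := (IH hndl (insert s J)).mp hch
      have hK₁K : insert s J ⊆ K := le_trans Finset.subset_union_right hsub'
      have hlFK : l.toFinset ⊆ K := le_trans Finset.subset_union_left hsub'
      have hsK : s ∈ K := hK₁K (Finset.mem_insert_self s J)
      have hiK : i ∈ K := hK₁K hiK₁
      have hJK : J ⊆ K := fun a ha => hK₁K (Finset.mem_insert_of_mem ha)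
      have hrtgK : Relation.ReflTransGen (dRel C K) s i := rtg_mono hK₁K hrtg₁
      refine ⟨?_, ?_⟩
      · rw [Finset.union_subset_iff]
        refine ⟨Finset.insert_subset hiK hlFK, hJK⟩
      · intro v hv
        have hmemiff : s ∈ dynkinComponent C K v ↔ i ∈ dynkinComponent C K v :=
          dc_mem_iff_of_rel hsym hrtgK hsK hiK
        have hv' := hcards' v hv
        by_cases hiV : i ∈ dynkinComponent C K v
        · have hsV : s ∈ dynkinComponent C K v := hmemiff.mpr hiV
          rw [card_inter_insert_of_mem hsV hsJ] at hv'
          rw [card_inter_insert_of_mem hiV hilF]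
          omega
        · have hsV : s ∉ dynkinComponent C K v := fun h => hiV (hmemiff.mp h)
          rw [inter_insert_of_not_mem' hsV] at hv'
          rw [inter_insert_of_not_mem' hiV]
          omega
    · rintro ⟨hsub, hcards⟩
      have hiK : i ∈ K := hsub (Finset.mem_union_left _ (Finset.mem_insert_self i _))
      have hlFK : l.toFinset ⊆ K := fun a ha =>
        hsub (Finset.mem_union_left _ (Finset.mem_insert_of_mem ha))
      have hJK : J ⊆ K := le_trans Finset.subset_union_right hsub
      by_cases hiJ : i ∈ J
      · -- find s via path argument
        have hiVi : i ∈ dynkinComponent C K i := dc_self hiK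
        have hViJlt : (dynkinComponent C K i ∩ J).card < (dynkinComponent C K i).card := by
          have h := hcards i hiK
          have hpos : 0 < (dynkinComponent C K i ∩ insert i l.toFinset).card :=
            Finset.card_pos.mpr ⟨i, Finset.mem_inter.mpr ⟨hiVi, Finset.mem_insert_self i _⟩⟩
          omega
        have hnsub : ¬ dynkinComponent C K i ⊆ J := by
          intro hsubJ
          rw [Finset.inter_eq_left.mpr hsubJ] at hViJlt
          exact lt_irrefl _ hViJlt
        obtain ⟨x, hxVi, hxJ⟩ := Finset.not_subset.mp hnsub
        have hex : ∃ s, s ∈ dynkinComponent C K i ∧ s ∉ J ∧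
            Relation.ReflTransGen (dRel C (insert s J)) i s := by
          by_contra hcon
          push_neg at hcon
          have hclaim : ∀ u, Relation.ReflTransGen (dRel C K) i u →
              (u ∈ J ∧ Relation.ReflTransGen (dRel C J) i u) := by
            intro u hu
            induction hu with
            | refl => exact ⟨hiJ, .refl⟩
            | tail hab hbc ih2 =>
              rename_i b c
              obtain ⟨hbJ, hrJb⟩ := ih2
              obtain ⟨hbK, hcK, hbc_ne, hbc_C⟩ := hbc
              by_cases hcJ : c ∈ J
              · exact ⟨hcJ, hrJb.tail ⟨hbJ, hcJ, hbc_ne, hbc_C⟩⟩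
              · exfalso
                have hcVi : c ∈ dynkinComponent C K i :=
                  mem_dynkinComponent.mpr ⟨hcK, hab.tail ⟨hbK, hcK, hbc_ne, hbc_C⟩⟩
                apply hcon c hcVi hcJ
                have h1 : Relation.ReflTransGen (dRel C (insert c J)) i b :=
                  rtg_mono (Finset.subset_insert c J) hrJb
                exact h1.tail ⟨Finset.mem_insert_of_mem hbJ, Finset.mem_insert_self c J,
                  hbc_ne, hbc_C⟩
          exact hxJ (hclaim x (mem_dynkinComponent.mp hxVi).2).1
        obtain ⟨s, hsVi, hsJ, hrtg⟩ := hex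
        have hsK : s ∈ K := dc_subset hsVi
        have hK₁K : insert s J ⊆ K := Finset.insert_subset hsK hJK
        refine ⟨insert s J, ?_, ?_⟩
        · exact (Mmat_ne_zero_iff hC).mpr
            ⟨s, hsJ, rfl, Finset.mem_insert_of_mem hiJ, rtg_symm hsym hrtg⟩
        · refine (IH hndl (insert s J)).mpr ⟨?_, ?_⟩
          · rw [Finset.union_subset_iff]
            exact ⟨hlFK, hK₁K⟩
          · intro v hv
            have h := hcards v hv
            have hrtgK_is : Relation.ReflTransGen (dRel C K) i s := rtg_mono hK₁K hrtg
            have hmemiff : i ∈ dynkinComponent C K v ↔ s ∈ dynkinComponent C K v :=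
              dc_mem_iff_of_rel hsym hrtgK_is hiK hsK
            by_cases hsV : s ∈ dynkinComponent C K v
            · have hiV : i ∈ dynkinComponent C K v := hmemiff.mpr hsV
              rw [card_inter_insert_of_mem hiV hilF] at h
              rw [card_inter_insert_of_mem hsV hsJ]
              omega
            · have hiV : i ∉ dynkinComponent C K v := fun h' => hsV (hmemiff.mp h')
              rw [inter_insert_of_not_mem' hiV] at h
              rw [inter_insert_of_not_mem' hsV]
              omega
      · refine ⟨insert i J, ?_, ?_⟩
        · exact (Mmat_ne_zero_iff hC).mpr
            ⟨i, hiJ, rfl, Finset.mem_insert_self i J, .refl⟩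
        · refine (IH hndl (insert i J)).mpr ⟨?_, ?_⟩
          · rw [Finset.union_subset_iff]
            exact ⟨hlFK, Finset.insert_subset hiK hJK⟩
          · intro v hv
            have h := hcards v hv
            by_cases hiV : i ∈ dynkinComponent C K v
            · rw [card_inter_insert_of_mem hiV hilF] at h
              rw [card_inter_insert_of_mem hiV hiJ]
              omega
            · rw [inter_insert_of_not_mem' hiV] at h
              rw [inter_insert_of_not_mem' hiV]
              omega

end Chain

/-- for `I = {i_1 < … < i_l}` define `m_{I,J}^K := [M_{i_1}···M_{i_l}]_{(J,K)}`.
Then `m_{I,J}^K ≠ 0` if and only if `I ∪ J ⊆ K` and, for every connected component `V` of `K`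
in the Dynkin graph of `C`, `|V| = |V ∩ I| + |V ∩ J|`. -/
theorem peterson_structure_constants_nonzero_iff_nonequivariant {n : ℕ}
    (C : Matrix (Fin n) (Fin n) ℤ) (hC : IsFiniteCartan C)
    (I J K : Finset (Fin n)) :
    ((I.sort (· ≤ ·)).map (Mmat C)).prod J K ≠ 0 ↔
      I ∪ J ⊆ K ∧ ∀ v ∈ K,
        (dynkinComponent C K v).card =
          ((dynkinComponent C K v) ∩ I).card + ((dynkinComponent C K v) ∩ J).card := by
  have hnn : ∀ M ∈ (I.sort (· ≤ ·)).map (Mmat C), ∀ a b : Finset (Fin n), 0 ≤ M a b := by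
    intro M hM a b
    obtain ⟨i, -, rfl⟩ := List.mem_map.mp hM
    exact Mmat_nonneg hC i a b
  rw [(prod_entry_sign _ hnn J K).2]
  have h := chain_iff_cond hC K (I.sort (· ≤ ·)) (Finset.sort_nodup I _) J
  rw [Finset.sort_toFinset] at h
  exact h
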